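/- arXiv:1012.0958 — 2 statements merged into one kernel-verified Lean document; each statement's English description precedes it below -/
import Mathlib

section
/- Let H ∈ R^{n×m}, e ∈ R^n, β > 0, 0 < p ≤ 1, ε > 0, and define J_ε(w) = (1/2)|Hw − e|² + β·Σ_j Ψ_ε(w_j²), where Ψ_ε(x) = (p/2) x ε^{p−2} + (1 − p/2)ε^p for x ≤ ε² and x^{p/2} for x ≥ ε². If the sequence (w^k) is generated by the iteration (HᵀH + β T^k) w^{k+1} = Hᵀe with diagonal T^k_{jj} = p / max(ε^{2−p}, |w_j^k|^{2−p}), then J_ε(w^{k+1}) + (1/2)|H(w^{k+1} − w^k)|² + (β/2)Σ_j T^k_{jj}|w_j^{k+1} − w_j^k|² ≤ J_ε(w^k); in particular J_ε(w^k) is monotonically nonincreasing. -/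
lemma bern_rpow (q : ℝ) (hq0 : 0 < q) (hq1 : q ≤ 1) (x y : ℝ) (hx : 0 ≤ x) (hy : 0 < y) :
    x ^ q ≤ y ^ q + q * y ^ (q - 1) * (x - y) := by
  have h := Real.geom_mean_le_arith_mean2_weighted (w₁ := q) (w₂ := 1 - q) (p₁ := x / y)
    (p₂ := 1) hq0.le (by linarith) (div_nonneg hx hy.le) zero_le_one (by ring)
  rw [Real.one_rpow, mul_one, mul_one] at h
  have hyq : (0:ℝ) < y ^ q := Real.rpow_pos_of_pos hy q
  have h2 : (x / y) ^ q * y ^ q ≤ (q * (x / y) + (1 - q)) * y ^ q :=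
    mul_le_mul_of_nonneg_right h hyq.le
  rw [Real.div_rpow hx hy.le, div_mul_cancel₀ _ (ne_of_gt hyq)] at h2
  have h3 : y ^ (q - 1) = y ^ q / y := by
    rw [Real.rpow_sub hy, Real.rpow_one]
  rw [h3]
  calc x ^ q ≤ (q * (x / y) + (1 - q)) * y ^ q := h2
    _ = y ^ q + q * (y ^ q / y) * (x - y) := by field_simp; ring

lemma psi_key (p ε : ℝ) (hp0 : 0 < p) (hp1 : p ≤ 1) (hε : 0 < ε)
    (Ψ : ℝ → ℝ)
    (hΨ : ∀ x : ℝ, Ψ x = if x ≤ ε ^ 2 then (p / 2) * x * ε ^ (p - 2) + (1 - p / 2) * ε ^ p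
      else x ^ (p / 2))
    (u v : ℝ) :
    Ψ (u ^ 2) ≤ Ψ (v ^ 2) + p / max (ε ^ (2 - p)) (|v| ^ (2 - p)) / 2 * (u ^ 2 - v ^ 2) := by
  have hq0 : (0:ℝ) < p / 2 := by linarith
  have hq1 : p / 2 ≤ 1 := by linarith
  have hε2 : (0:ℝ) < ε ^ 2 := by positivity
  have hcast : ε ^ (2:ℕ) = ε ^ ((2:ℕ):ℝ) := (Real.rpow_natCast ε 2).symm
  have hεp : (ε ^ 2) ^ (p / 2) = ε ^ p := by
    rw [hcast, ← Real.rpow_mul hε.le, show ((2:ℕ):ℝ) * (p / 2) = p by push_cast; ring]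
  have hεslope : (ε ^ 2) ^ (p / 2 - 1) = ε ^ (p - 2) := by
    rw [hcast, ← Real.rpow_mul hε.le, show ((2:ℕ):ℝ) * (p / 2 - 1) = p - 2 by push_cast; ring]
  have hεinv : ε ^ (p - 2) = (ε ^ (2 - p))⁻¹ := by
    rw [show p - 2 = -(2 - p) by ring, Real.rpow_neg hε.le]
  have hε2p : (0:ℝ) < ε ^ (2 - p) := Real.rpow_pos_of_pos hε _
  have hprod : ε ^ (p - 2) * ε ^ 2 = ε ^ p := by
    rw [hcast, ← Real.rpow_add hε, show p - 2 + ((2:ℕ):ℝ) = p by push_cast; ring]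
  have hprod2 : p / 2 * (ε ^ (p - 2) * ε ^ 2) = p / 2 * ε ^ p := by rw [hprod]
  have hdiv : p / ε ^ (2 - p) / 2 = p / 2 * (ε ^ (2 - p))⁻¹ := by
    rw [div_div, mul_comm (ε ^ (2 - p)) 2, ← div_div, div_eq_mul_inv]
  rcases le_or_gt (|v|) ε with hv | hv
  · -- max = ε^(2-p), v^2 ≤ ε^2
    have hmax : max (ε ^ (2 - p)) (|v| ^ (2 - p)) = ε ^ (2 - p) :=
      max_eq_left (Real.rpow_le_rpow (abs_nonneg v) hv (by linarith))
    have hv2 : v ^ 2 ≤ ε ^ 2 := by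
      rw [← sq_abs v]; exact pow_le_pow_left₀ (abs_nonneg v) hv 2
    rw [hmax, hΨ (v ^ 2), if_pos hv2, hΨ (u ^ 2), hdiv]
    split_ifs with hu2
    · rw [hεinv]; exact le_of_eq (by ring)
    · push_neg at hu2
      have hb := bern_rpow (p / 2) hq0 hq1 (u ^ 2) (ε ^ 2) (by positivity) hε2
      rw [hεp, hεslope, hεinv] at hb
      have key2 : p / 2 * ε ^ p = p / 2 * ((ε ^ (2 - p))⁻¹ * ε ^ 2) := by
        rw [hεinv] at hprod2; linarith
      rw [hεinv]
      linarith [hb]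
  · -- ε < |v|
    have habs : (0:ℝ) < |v| := lt_trans hε hv
    have hvne : |v| ^ (2 - p) ≠ 0 := ne_of_gt (Real.rpow_pos_of_pos habs _)
    have hmax : max (ε ^ (2 - p)) (|v| ^ (2 - p)) = |v| ^ (2 - p) :=
      max_eq_right (Real.rpow_le_rpow hε.le hv.le (by linarith))
    have hdivv : p / |v| ^ (2 - p) / 2 = p / 2 * (|v| ^ (2 - p))⁻¹ := by
      rw [div_div, mul_comm (|v| ^ (2 - p)) 2, ← div_div, div_eq_mul_inv]
    have hv2 : ε ^ 2 ≤ v ^ 2 := by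
      calc ε ^ 2 ≤ |v| ^ 2 := pow_le_pow_left₀ hε.le hv.le 2
        _ = v ^ 2 := sq_abs v
    have hv2pos : (0:ℝ) < v ^ 2 := lt_of_lt_of_le hε2 hv2
    have hΨv : Ψ (v ^ 2) = (v ^ 2) ^ (p / 2) := by
      rw [hΨ (v ^ 2)]
      split_ifs with h
      · rw [le_antisymm h hv2, hεp]
        linarith [hprod2]
      · rfl
    have hvslope : (v ^ 2) ^ (p / 2 - 1) = (|v| ^ (2 - p))⁻¹ := by
      rw [← sq_abs v, show |v| ^ (2:ℕ) = |v| ^ ((2:ℕ):ℝ) from (Real.rpow_natCast |v| 2).symm,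
        ← Real.rpow_mul (abs_nonneg v),
        show ((2:ℕ):ℝ) * (p / 2 - 1) = -(2 - p) by push_cast; ring,
        Real.rpow_neg (abs_nonneg v)]
    have hb := bern_rpow (p / 2) hq0 hq1 (u ^ 2) (v ^ 2) (by positivity) hv2pos
    rw [hvslope] at hb
    rw [hmax, hΨv, hΨ (u ^ 2), hdivv]
    split_ifs with hu2
    · have hb1 := bern_rpow (p / 2) hq0 hq1 (ε ^ 2) (v ^ 2) hε2.le hv2pos
      rw [hvslope, hεp] at hb1
      have hslopes : (|v| ^ (2 - p))⁻¹ ≤ ε ^ (p - 2) := by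
        rw [hεinv]
        exact inv_anti₀ hε2p (Real.rpow_le_rpow hε.le hv.le (by linarith))
      have hslopes2 : p / 2 * (|v| ^ (2 - p))⁻¹ ≤ p / 2 * ε ^ (p - 2) :=
        mul_le_mul_of_nonneg_left hslopes (by linarith)
      have hmul : p / 2 * ε ^ (p - 2) * (u ^ 2 - ε ^ 2) ≤
          p / 2 * (|v| ^ (2 - p))⁻¹ * (u ^ 2 - ε ^ 2) :=
        mul_le_mul_of_nonpos_right hslopes2 (by linarith)
      have hlin : p / 2 * u ^ 2 * ε ^ (p - 2) + (1 - p / 2) * ε ^ p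
          = ε ^ p + p / 2 * ε ^ (p - 2) * (u ^ 2 - ε ^ 2) := by
        linarith [hprod2]
      rw [hlin]
      linarith [hb1, hmul]
    · linarith [hb]

theorem descent_estimate_for_lp_iteration
    (n m : ℕ) (H : Matrix (Fin n) (Fin m) ℝ) (e : Fin n → ℝ)
    (β p ε : ℝ) (hβ : 0 < β) (hp0 : 0 < p) (hp1 : p ≤ 1) (hε : 0 < ε)
    (Ψ : ℝ → ℝ)
    (hΨ : ∀ x : ℝ, Ψ x = if x ≤ ε ^ 2 then (p / 2) * x * ε ^ (p - 2) + (1 - p / 2) * ε ^ p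
      else x ^ (p / 2))
    (J : (Fin m → ℝ) → ℝ)
    (hJ : ∀ w : Fin m → ℝ,
      J w = (1 / 2) * (∑ i, (H.mulVec w i - e i) ^ 2) + β * ∑ j, Ψ ((w j) ^ 2))
    (w : ℕ → Fin m → ℝ)
    (hiter : ∀ k : ℕ, ∀ j : Fin m,
      H.transpose.mulVec (H.mulVec (w (k + 1))) j
        + β * (p / max (ε ^ (2 - p)) (|w k j| ^ (2 - p))) * w (k + 1) j
        = H.transpose.mulVec e j) :
    (∀ k : ℕ,
      J (w (k + 1))
        + (1 / 2) * (∑ i, (H.mulVec (w (k + 1)) i - H.mulVec (w k) i) ^ 2)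
        + (β / 2) * (∑ j, (p / max (ε ^ (2 - p)) (|w k j| ^ (2 - p)))
            * (w (k + 1) j - w k j) ^ 2)
      ≤ J (w k)) ∧
    (∀ k : ℕ, J (w (k + 1)) ≤ J (w k)) := by
  have main : ∀ k : ℕ,
      J (w (k + 1))
        + (1 / 2) * (∑ i, (H.mulVec (w (k + 1)) i - H.mulVec (w k) i) ^ 2)
        + (β / 2) * (∑ j, (p / max (ε ^ (2 - p)) (|w k j| ^ (2 - p)))
            * (w (k + 1) j - w k j) ^ 2)
      ≤ J (w k) := by
    intro k
    set u : Fin m → ℝ := w (k + 1) with hu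
    set v : Fin m → ℝ := w k with hv
    set T : Fin m → ℝ := fun j => p / max (ε ^ (2 - p)) (|v j| ^ (2 - p)) with hT
    -- adjoint identity
    have Adj : ∀ y : Fin n → ℝ,
        ∑ j, H.transpose.mulVec y j * (u j - v j)
          = ∑ i, y i * (H.mulVec u i - H.mulVec v i) := by
      intro y
      simp only [Matrix.mulVec, dotProduct, Matrix.transpose_apply,
        Finset.sum_mul, mul_sub, Finset.mul_sum, ← Finset.sum_sub_distrib]
      rw [Finset.sum_comm]
      exact Finset.sum_congr rfl fun i _ => Finset.sum_congr rfl fun j _ => by ring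
    -- tested iteration equation
    have E0 : ∑ j, (H.transpose.mulVec (H.mulVec u) j + β * T j * u j) * (u j - v j)
        = ∑ j, H.transpose.mulVec e j * (u j - v j) :=
      Finset.sum_congr rfl fun j _ => by rw [hiter k j]
    have E1 : ∑ j, (H.transpose.mulVec (H.mulVec u) j + β * T j * u j) * (u j - v j)
        = ∑ j, H.transpose.mulVec (H.mulVec u) j * (u j - v j)
          + β * ∑ j, T j * u j * (u j - v j) := by
      rw [Finset.mul_sum, ← Finset.sum_add_distrib]
      exact Finset.sum_congr rfl fun j _ => by ring
    have E : ∑ i, H.mulVec u i * (H.mulVec u i - H.mulVec v i)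
        + β * ∑ j, T j * u j * (u j - v j)
        = ∑ i, e i * (H.mulVec u i - H.mulVec v i) := by
      rw [← Adj (H.mulVec u), ← Adj e, ← E1, E0]
    -- quadratic identity
    have I1 : ∑ i, (H.mulVec v i - e i) ^ 2
        = ∑ i, (H.mulVec u i - e i) ^ 2
          - 2 * ∑ i, H.mulVec u i * (H.mulVec u i - H.mulVec v i)
          + 2 * ∑ i, e i * (H.mulVec u i - H.mulVec v i)
          + ∑ i, (H.mulVec u i - H.mulVec v i) ^ 2 := by
      rw [Finset.mul_sum, Finset.mul_sum, ← Finset.sum_sub_distrib, ← Finset.sum_add_distrib,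
        ← Finset.sum_add_distrib]
      exact Finset.sum_congr rfl fun i _ => by ring
    -- pointwise sum inequality
    have Psum : ∑ j, Ψ (u j ^ 2)
        ≤ ∑ j, Ψ (v j ^ 2) + ∑ j, T j / 2 * (u j ^ 2 - v j ^ 2) := by
      rw [← Finset.sum_add_distrib]
      refine Finset.sum_le_sum fun j _ => ?_
      have := psi_key p ε hp0 hp1 hε Ψ hΨ (u j) (v j)
      calc Ψ (u j ^ 2) ≤ Ψ (v j ^ 2)
            + p / max (ε ^ (2 - p)) (|v j| ^ (2 - p)) / 2 * (u j ^ 2 - v j ^ 2) := this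
        _ = Ψ (v j ^ 2) + T j / 2 * (u j ^ 2 - v j ^ 2) := by rw [hT]
    -- sum identity connecting the three T-sums
    have hP : ∑ j, T j * u j * (u j - v j) - (1 / 2) * ∑ j, T j * (u j - v j) ^ 2
        = ∑ j, T j / 2 * (u j ^ 2 - v j ^ 2) := by
      rw [Finset.mul_sum, ← Finset.sum_sub_distrib]
      exact Finset.sum_congr rfl fun j _ => by ring
    rw [hJ u, hJ v]
    have hβP : β * ∑ j, Ψ (u j ^ 2)
        ≤ β * (∑ j, Ψ (v j ^ 2) + ∑ j, T j / 2 * (u j ^ 2 - v j ^ 2)) :=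
      mul_le_mul_of_nonneg_left Psum hβ.le
    have hPβ : β * (∑ j, T j * u j * (u j - v j) - (1 / 2) * ∑ j, T j * (u j - v j) ^ 2)
        = β * ∑ j, T j / 2 * (u j ^ 2 - v j ^ 2) := by rw [hP]
    nlinarith [E, I1, hPβ, hβP]
  refine ⟨main, fun k => ?_⟩
  have h1 : (0:ℝ) ≤ ∑ i, (H.mulVec (w (k + 1)) i - H.mulVec (w k) i) ^ 2 :=
    Finset.sum_nonneg fun i _ => sq_nonneg _
  have h2 : (0:ℝ) ≤ ∑ j, (p / max (ε ^ (2 - p)) (|w k j| ^ (2 - p)))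
      * (w (k + 1) j - w k j) ^ 2 := by
    refine Finset.sum_nonneg fun j _ => mul_nonneg ?_ (sq_nonneg _)
    exact div_nonneg hp0.le (le_trans (Real.rpow_pos_of_pos hε _).le (le_max_left _ _))
  have h2' : (0:ℝ) ≤ β / 2 * ∑ j, (p / max (ε ^ (2 - p)) (|w k j| ^ (2 - p)))
      * (w (k + 1) j - w k j) ^ 2 := mul_nonneg (by linarith) h2
  linarith [main k]
end

section
/- The sequence (w^k) generated by the iteration (HᵀH + β T^k) w^{k+1} = Hᵀe is bounded: sup_k |w^k| < ∞. -/
/-!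
Pairing the `k`-th equation with `w^{k+1}` gives
`‖H w^{k+1}‖² + β Σ_j T^k_jj (w_j^{k+1})² = ⟪e, H w^{k+1}⟫ ≤ ‖H w^{k+1}‖² + ‖e‖²/4`,
so every single term obeys `β T^k_jj (w_j^{k+1})² ≤ ‖e‖²/4`, i.e.
`(w_j^{k+1})² ≤ K · max(ε^{2-p}, |w_j^k|^{2-p})` with `K = ‖e‖²/(4βp)`.
Because `B^p · B^{2-p} = B²`, the bound `|w_j| ≤ B` propagates from `w^k` to `w^{k+1}`
as soon as `ε ≤ B` and `K ≤ B^p`, and such a `B` dominating `w^0` exists.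
-/

open Matrix

lemma dotProduct_sub_dotProduct_self_le {ι : Type*} [Fintype ι] (e u : ι → ℝ) :
    e ⬝ᵥ u - u ⬝ᵥ u ≤ e ⬝ᵥ e / 4 := by
  simp only [dotProduct, Finset.sum_div, ← Finset.sum_sub_distrib]
  exact Finset.sum_le_sum fun i _ => by nlinarith [sq_nonneg (e i - 2 * u i)]

lemma sum_mul_sq_le_of_normal_eq {ι κ : Type*} [Fintype ι] [Fintype κ]
    (H : Matrix ι κ ℝ) (e : ι → ℝ) (d v : κ → ℝ)
    (h : ∀ j, (Hᵀ *ᵥ (H *ᵥ v)) j + d j * v j = (Hᵀ *ᵥ e) j) :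
    ∑ j, d j * v j ^ 2 ≤ e ⬝ᵥ e / 4 := by
  have energy : (H *ᵥ v) ⬝ᵥ (H *ᵥ v) + ∑ j, d j * v j ^ 2 = e ⬝ᵥ (H *ᵥ v) := by
    rw [← dotProduct_transpose_mulVec H v, ← dotProduct_transpose_mulVec H v e, dotProduct,
      dotProduct, ← Finset.sum_add_distrib]
    exact Finset.sum_congr rfl fun j _ => by linear_combination v j * h j
  linarith [dotProduct_sub_dotProduct_self_le e (H *ᵥ v)]

lemma mul_sq_le_of_normal_eq {ι κ : Type*} [Fintype ι] [Fintype κ]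
    (H : Matrix ι κ ℝ) (e : ι → ℝ) (d v : κ → ℝ) (hd : ∀ j, 0 ≤ d j)
    (h : ∀ j, (Hᵀ *ᵥ (H *ᵥ v)) j + d j * v j = (Hᵀ *ᵥ e) j) (j : κ) :
    d j * v j ^ 2 ≤ e ⬝ᵥ e / 4 :=
  (Finset.single_le_sum (fun i _ => mul_nonneg (hd i) (sq_nonneg (v i)))
    (Finset.mem_univ j)).trans (sum_mul_sq_le_of_normal_eq H e d v h)

lemma sq_le_of_mul_div_mul_sq_le {β p D S y : ℝ} (hβ : 0 < β) (hp : 0 < p) (hD : 0 < D)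
    (h : β * (p / D) * y ^ 2 ≤ S) : y ^ 2 ≤ S / (β * p) * D := by
  rw [div_mul_eq_mul_div, le_div_iff₀ (by positivity)]
  calc y ^ 2 * (β * p) = β * (p / D) * y ^ 2 * D := by field_simp
    _ ≤ S * D := mul_le_mul_of_nonneg_right h hD.le

lemma abs_le_of_sq_le_mul_max_rpow {p ε K B x y : ℝ} (hp : p ≤ 2) (hε : 0 ≤ ε)
    (hεB : ε ≤ B) (hKB : K ≤ B ^ p) (hx : |x| ≤ B)
    (hy : y ^ 2 ≤ K * max (ε ^ (2 - p)) (|x| ^ (2 - p))) : |y| ≤ B := by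
  have hB : 0 ≤ B := hε.trans hεB
  have hmax : max (ε ^ (2 - p)) (|x| ^ (2 - p)) ≤ B ^ (2 - p) :=
    max_le (Real.rpow_le_rpow hε hεB (by linarith))
      (Real.rpow_le_rpow (abs_nonneg x) hx (by linarith))
  refine abs_le_of_sq_le_sq ?_ hB
  calc y ^ 2 ≤ K * max (ε ^ (2 - p)) (|x| ^ (2 - p)) := hy
    _ ≤ B ^ p * B ^ (2 - p) := by gcongr
    _ = B ^ 2 := by
      rw [← Real.rpow_add' hB (by norm_num), add_sub_cancel, Real.rpow_two]


theorem iterates_bounded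
    (n m : ℕ) (H : Matrix (Fin n) (Fin m) ℝ) (e : Fin n → ℝ)
    (β p ε : ℝ) (hβ : 0 < β) (hp0 : 0 < p) (hp1 : p ≤ 1) (hε : 0 < ε)
    (w : ℕ → Fin m → ℝ)
    (hiter : ∀ k : ℕ, ∀ j : Fin m,
      H.transpose.mulVec (H.mulVec (w (k + 1))) j
        + β * (p / max (ε ^ (2 - p)) (|w k j| ^ (2 - p))) * w (k + 1) j
        = H.transpose.mulVec e j) :
    ∃ C : ℝ, ∀ k : ℕ, (∑ j, (w k j) ^ 2) ≤ C := by
  set K := e ⬝ᵥ e / 4 / (β * p)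
  have hK : 0 ≤ K := by
    have : 0 ≤ e ⬝ᵥ e := Finset.sum_nonneg fun i _ => mul_self_nonneg (e i)
    positivity
  have hD : ∀ k j, 0 < max (ε ^ (2 - p)) (|w k j| ^ (2 - p)) :=
    fun k j => lt_max_of_lt_left (Real.rpow_pos_of_pos hε _)
  have step : ∀ k j, w (k + 1) j ^ 2 ≤ K * max (ε ^ (2 - p)) (|w k j| ^ (2 - p)) :=
    fun k j => sq_le_of_mul_div_mul_sq_le hβ hp0 (hD k j) <|
      mul_sq_le_of_normal_eq H e _ (w (k + 1)) (fun i => by have := hD k i; positivity)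
        (hiter k) j
  set B := ε + ∑ j, |w 0 j| + K ^ p⁻¹
  have hsum : 0 ≤ ∑ j, |w 0 j| := Finset.sum_nonneg fun j _ => abs_nonneg _
  have hroot : 0 ≤ K ^ p⁻¹ := by positivity
  have hKB : K ≤ B ^ p :=
    calc K = (K ^ p⁻¹) ^ p := (Real.rpow_inv_rpow hK hp0.ne').symm
      _ ≤ B ^ p := Real.rpow_le_rpow hroot (by linarith) hp0.le
  have bound : ∀ k j, |w k j| ≤ B := by
    intro k
    induction k with
    | zero =>
      exact fun j => (Finset.single_le_sum (fun i _ => abs_nonneg (w 0 i))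
        (Finset.mem_univ j)).trans (by linarith)
    | succ k ih =>
      exact fun j => abs_le_of_sq_le_mul_max_rpow (by linarith) hε.le (by linarith) hKB (ih j)
        (step k j)
  refine ⟨m * B ^ 2, fun k => ?_⟩
  calc ∑ j, w k j ^ 2 ≤ ∑ _j : Fin m, B ^ 2 := Finset.sum_le_sum fun j _ =>
        (sq_abs (w k j)).symm.trans_le (pow_le_pow_left₀ (abs_nonneg _) (bound k j) 2)
    _ = m * B ^ 2 := by simp
end
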